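/- Monotone resolution of Maybe cells: in the Evaluator Machine for □_{[t1,t2]} α, every queue cell's value, once set to ⊤ or ⊥, is never changed back to M or to the other definite value while it remains in the queue; formally, for all times t and indices k < length, if Q^t[k] ∈ {⊤,⊥} then Q^{t+1}[k+1] = Q^t[k]. -/

import Mathlib

/-- Queue cell values: `⊤`, `⊥`, or `Maybe`. -/
inductive Cell : Type
  | top : Cell
  | bot : Cell
  | maybe : Cell
deriving DecidableEq

/-- `run step i` is the queue contents after performing the steps of times `0, 1, …, i`
starting from the empty queue. -/
def run (step : ℕ → List Cell → List Cell) : ℕ → List Cell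
  | 0 => step 0 []
  | i + 1 => step (i + 1) (run step i)

/-- Set every cell with index in `[a, b]` to `v`. -/
def setRange (a b : ℕ) (v : Cell) (q : List Cell) : List Cell :=
  q.mapIdx fun j c => if a ≤ j ∧ j ≤ b then v else c

/-- Set the cell at index `k` to `v`, but only if its current value is `Maybe`. -/
def setIfMaybe (k : ℕ) (v : Cell) (q : List Cell) : List Cell :=
  q.mapIdx fun j c => if j = k ∧ c = Cell.maybe then v else c

/-- Set every cell with index in `[a, b]` whose current value is `Maybe` to `v`. -/
def setRangeIfMaybe (a b : ℕ) (v : Cell) (q : List Cell) : List Cell :=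
  q.mapIdx fun j c => if (a ≤ j ∧ j ≤ b) ∧ c = Cell.maybe then v else c

/-- One step of the Evaluator Machine for `□_{[t1,t2]} α` at time `i`: prepend `Maybe`;
if `α` holds at time `i`, set the cell at index `t2` to `⊤` only if it is `Maybe`;
if `α` fails at time `i`, set all cells with indices in `[t1, t2]` to `⊥`.
Cells at indices `> t2` are never modified. -/
def boxStep (α : ℕ → Bool) (t1 t2 : ℕ) (i : ℕ) (q : List Cell) : List Cell :=
  let q' := Cell.maybe :: q
  if α i then setIfMaybe t2 Cell.top q' else setRange t1 t2 Cell.bot q'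

/-!
A `⊤` is only ever written at index `t2`, and every step shifts the queue up by one, so a `⊤`
cell always sits at an index `≥ t2`. After the next shift it lies strictly above `t2`, out of
reach of the `⊥`-rule, which only touches indices in `[t1, t2]`; the `⊤`-rule only touches
`Maybe` cells, and a `⊥` cell can only be overwritten by `⊥`.
-/

/-- The new value of the cell at index `j` of the shifted queue, if it held `c`. -/
def boxCell (α : ℕ → Bool) (t1 t2 i j : ℕ) (c : Cell) : Cell :=
  if α i then (if j = t2 ∧ c = Cell.maybe then Cell.top else c)
  else (if t1 ≤ j ∧ j ≤ t2 then Cell.bot else c)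

def TopsFrom (n : ℕ) (q : List Cell) : Prop :=
  ∀ k, q[k]? = some Cell.top → n ≤ k

section boxStep

variable (α : ℕ → Bool) (t1 t2 i : ℕ)

theorem getElem?_boxStep (q : List Cell) (j : ℕ) :
    (boxStep α t1 t2 i q)[j]? = (Cell.maybe :: q)[j]?.map (boxCell α t1 t2 i j) := by
  unfold boxStep boxCell
  cases α i <;> simp only [Bool.false_eq_true, ↓reduceIte, setIfMaybe, setRange,
    List.getElem?_mapIdx]

variable {α t1 t2 i}

theorem eq_or_eq_top_of_boxCell_eq_top {j : ℕ} {c : Cell}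
    (h : boxCell α t1 t2 i j c = Cell.top) : j = t2 ∨ c = Cell.top := by
  unfold boxCell at h
  split_ifs at h <;> simp_all

theorem boxCell_eq_self {j : ℕ} {c : Cell} (hdef : c ≠ Cell.maybe)
    (htop : c = Cell.top → t2 < j) : boxCell α t1 t2 i j c = c := by
  unfold boxCell
  split_ifs with _ hset hrange
  · exact absurd hset.2 hdef
  · rfl
  · cases c
    · exact absurd hrange.2 (htop rfl).not_ge
    · rfl
    · exact absurd rfl hdef
  · rfl

theorem TopsFrom.boxStep {q : List Cell} (hq : TopsFrom t2 q) :
    TopsFrom t2 (boxStep α t1 t2 i q) := by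
  intro j hj
  rw [getElem?_boxStep, Option.map_eq_some_iff] at hj
  obtain ⟨c, hc, htop⟩ := hj
  rcases eq_or_eq_top_of_boxCell_eq_top htop with rfl | rfl
  · exact le_rfl
  · cases j with
    | zero => simp at hc
    | succ k => exact (hq k hc).trans k.le_succ

theorem getElem?_boxStep_succ {q : List Cell} (hq : TopsFrom t2 q) {k : ℕ} {c : Cell}
    (hc : q[k]? = some c) (hdef : c ≠ Cell.maybe) :
    (boxStep α t1 t2 i q)[k + 1]? = some c := by
  rw [getElem?_boxStep, List.getElem?_cons_succ, hc, Option.map_some,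
    boxCell_eq_self hdef fun h => Nat.lt_succ_of_le (hq k (h ▸ hc))]

end boxStep

theorem topsFrom_run_boxStep (α : ℕ → Bool) (t1 t2 : ℕ) :
    ∀ t, TopsFrom t2 (run (boxStep α t1 t2) t)
  | 0 => TopsFrom.boxStep (q := []) (by simp [TopsFrom])
  | t + 1 => (topsFrom_run_boxStep α t1 t2 t).boxStep

theorem box_EM_definite_preserved_general (α : ℕ → Bool) (t1 t2 : ℕ)
    (t k : ℕ) (c : Cell) (hc : (run (boxStep α t1 t2) t)[k]? = some c)
    (hdef : c ≠ Cell.maybe) :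
    (run (boxStep α t1 t2) (t + 1))[k + 1]? = some c :=
  getElem?_boxStep_succ (topsFrom_run_boxStep α t1 t2 t) hc hdef

/-- Monotone resolution of `Maybe` cells in the Box Evaluator Machine: once a queue
cell holds a definite value (`⊤` or `⊥`), that value is preserved (shifted up by one
index) at the next time step: if `Q^t[k] ∈ {⊤, ⊥}` then `Q^{t+1}[k+1] = Q^t[k]`. -/
theorem box_EM_definite_preserved (α : ℕ → Bool) (t1 t2 : ℕ) (h12 : t1 ≤ t2)
    (t k : ℕ) (c : Cell) (hc : (run (boxStep α t1 t2) t)[k]? = some c)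
    (hdef : c ≠ Cell.maybe) :
    (run (boxStep α t1 t2) (t + 1))[k + 1]? = some c :=
  box_EM_definite_preserved_general α t1 t2 t k c hc hdef
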